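/- arXiv:math/0002063 — 2 statements merged into one kernel-verified Lean document; each statement's English description precedes it below -/
import Mathlib

section
/- Let r be a positive real number and let n, n' be natural numbers. Then the series Σ_{m=0}^∞ (e^{-r²} r^{2m+n+n'} / (m! √(n! n'!))) · ₂F₀(-m, -n; -1/r²) · ₂F₀(-m, -n'; -1/r²) converges, and it equals 1 if n = n' and equals 0 if n ≠ n'. (This expresses the orthonormality of the columns of the unitary matrix ⟨m|U(g)|n⟩ = (-1)^m e^{i(m-n)ψ - inφ} r^{n+m} e^{-r²/2} ₂F₀(-m,-n;-1/r²)/√(n! m!) representing the Euclidean group element g on the Fock space.) -/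
open Finset

lemma expHasSum (x : ℝ) : HasSum (fun t : ℕ => x ^ t / t.factorial) (Real.exp x) := by
  have h : Real.exp x = ∑' t : ℕ, x ^ t / t.factorial := by
    rw [Real.exp_eq_exp_ℝ, NormedSpace.exp_eq_tsum_div]
  rw [h]
  exact (Real.summable_pow_div_factorial x).hasSum

lemma shiftedExp (x : ℝ) (d : ℕ) :
    HasSum (fun m : ℕ => if d ≤ m then x ^ m * ((m - d).factorial : ℝ)⁻¹ else 0)
      (x ^ d * Real.exp x) := by
  set f : ℕ → ℝ := fun m => if d ≤ m then x ^ m * ((m - d).factorial : ℝ)⁻¹ else 0 with hf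
  have h1 : HasSum (fun t : ℕ => f (t + d)) (x ^ d * Real.exp x) := by
    have := (expHasSum x).mul_left (x ^ d)
    refine this.congr_fun fun t => ?_
    simp only [hf, if_pos (Nat.le_add_left d t), Nat.add_sub_cancel]
    rw [div_eq_mul_inv, ← mul_assoc, ← pow_add, Nat.add_comm d t]
  have h2 := (hasSum_nat_add_iff d).mp h1
  have h3 : ∑ i ∈ range d, f i = 0 := by
    apply Finset.sum_eq_zero
    intro i hi
    simp only [hf, if_neg (by simp at hi; omega : ¬ d ≤ i)]
  rwa [h3, add_zero] at h2

/-- Vandermonde, range form. -/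
lemma vdm (j t k : ℕ) :
    ∑ i ∈ range (k + 1), j.choose (k - i) * t.choose i = (j + t).choose k := by
  rw [Nat.add_choose_eq, Finset.Nat.sum_antidiagonal_eq_sum_range_succ_mk]
  rw [← Finset.sum_range_reflect]
  apply Finset.sum_congr rfl
  intro i hi
  simp only [Finset.mem_range] at hi
  have h1 : k + 1 - 1 - i = k - i := by omega
  have h2 : k - (k - i) = i := by omega
  rw [h1, h2]

/-- Core combinatorial identity. -/
lemma core (m j k : ℕ) :
    (m.choose j : ℝ) * m.choose k / m.factorial =
      ∑ i ∈ range (k + 1), (j.choose (k - i) : ℝ) / (j.factorial * i.factorial) *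
        (if j + i ≤ m then ((m - (j + i)).factorial : ℝ)⁻¹ else 0) := by
  rcases lt_or_ge m j with hmj | hjm
  · rw [Nat.choose_eq_zero_of_lt hmj]
    simp only [Nat.cast_zero, zero_mul, zero_div]
    symm
    apply Finset.sum_eq_zero
    intro i _
    rw [if_neg (by omega), mul_zero]
  · have key : ∀ i : ℕ, (j.choose (k - i) : ℝ) / (j.factorial * i.factorial) *
        (if j + i ≤ m then ((m - (j + i)).factorial : ℝ)⁻¹ else 0) =
        (j.choose (k - i) : ℝ) * (m.choose j) * ((m - j).choose i) / m.factorial := by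
      intro i
      rcases le_or_gt (j + i) m with him | him
      · rw [if_pos him]
        have hij : i ≤ m - j := by omega
        rw [Nat.cast_choose ℝ hjm, Nat.cast_choose ℝ hij]
        have h1 : (m - j) - i = m - (j + i) := by omega
        rw [h1]
        have hm : (m.factorial : ℝ) ≠ 0 := Nat.cast_ne_zero.mpr m.factorial_ne_zero
        have hj : (j.factorial : ℝ) ≠ 0 := Nat.cast_ne_zero.mpr j.factorial_ne_zero
        have hi : (i.factorial : ℝ) ≠ 0 := Nat.cast_ne_zero.mpr i.factorial_ne_zero
        have hmj' : ((m - j).factorial : ℝ) ≠ 0 := Nat.cast_ne_zero.mpr (m - j).factorial_ne_zero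
        have hmji : ((m - (j + i)).factorial : ℝ) ≠ 0 :=
          Nat.cast_ne_zero.mpr (m - (j + i)).factorial_ne_zero
        field_simp
      · rw [if_neg (by omega), Nat.choose_eq_zero_of_lt (by omega : m - j < i)]
        simp
    rw [Finset.sum_congr rfl fun i _ => key i]
    rw [← Finset.sum_div]
    have : ∑ i ∈ range (k + 1), (j.choose (k - i) : ℝ) * (m.choose j) * ((m - j).choose i) =
        (m.choose j : ℝ) * m.choose k := by
      have := vdm j (m - j) k
      rw [Nat.add_sub_cancel' hjm] at this
      calc ∑ i ∈ range (k + 1), (j.choose (k - i) : ℝ) * (m.choose j) * ((m - j).choose i)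
          = (m.choose j : ℝ) * ∑ i ∈ range (k + 1), (j.choose (k - i) : ℝ) * ((m - j).choose i) := by
            rw [Finset.mul_sum]; apply Finset.sum_congr rfl; intros; ring
        _ = (m.choose j : ℝ) * m.choose k := by
            rw [← this]; push_cast; ring
    rw [this]

/-- Binomial inversion. -/
lemma BI (N s : ℕ) :
    ∑ j ∈ range (N + 1), (-1 : ℝ) ^ j * (N.choose j) * (j.choose s) =
      if s = N then (-1 : ℝ) ^ N else 0 := by
  rcases lt_or_ge N s with hNs | hsN
  · rw [if_neg (by omega)]
    apply Finset.sum_eq_zero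
    intro j hj
    simp only [Finset.mem_range] at hj
    rw [Nat.choose_eq_zero_of_lt (by omega : j < s)]
    simp
  · -- sum over j from s to N
    have hz : ∀ j ∈ range (N + 1), j ∉ Finset.Ico s (N + 1) →
        (-1 : ℝ) ^ j * (N.choose j) * (j.choose s) = 0 := by
      intro j hj hj2
      simp only [Finset.mem_range] at hj
      simp only [Finset.mem_Ico] at hj2
      rw [Nat.choose_eq_zero_of_lt (by omega : j < s)]
      ring
    rw [← Finset.sum_subset (by rw [Finset.range_eq_Ico]; exact Finset.Ico_subset_Ico (by omega) le_rfl) hz]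
    rw [Finset.sum_Ico_eq_sum_range]
    have key : ∀ t ∈ range (N + 1 - s), (-1 : ℝ) ^ (s + t) * (N.choose (s + t)) * ((s + t).choose s)
        = (-1 : ℝ) ^ s * (N.choose s) * ((-1 : ℝ) ^ t * ((N - s).choose t)) := by
      intro t ht
      simp only [Finset.mem_range] at ht
      have := Nat.choose_mul (n := N) (by omega : s ≤ s + t)
      have h2 : (s + t) - s = t := by omega
      rw [h2] at this
      rw [pow_add]
      have hc : ((N.choose (s + t)) : ℝ) * ((s + t).choose s) = (N.choose s : ℝ) * ((N - s).choose t) := by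
        exact_mod_cast congrArg Nat.cast this
      linear_combination ((-1 : ℝ) ^ s * (-1 : ℝ) ^ t) * hc
    rw [Finset.sum_congr rfl key, ← Finset.mul_sum]
    have halt : ∑ t ∈ range (N + 1 - s), (-1 : ℝ) ^ t * ((N - s).choose t) =
        if N - s = 0 then 1 else 0 := by
      have h1 : N + 1 - s = (N - s) + 1 := by omega
      rw [h1]
      have h2 := @Int.alternating_sum_range_choose (N - s)
      have h3 := congrArg (fun z : ℤ => (z : ℝ)) h2
      push_cast at h3
      exact h3
    rw [halt]
    rcases eq_or_lt_of_le hsN with heq | hlt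
    · subst heq
      simp
    · rw [if_neg (by omega), if_neg (by omega)]
      ring

/-- Terminating hypergeometric sum ₂F₀(-m, -n; c)
    = Σ_{j=0}^{min(m,n)} (choose m j)(choose n j) j! c^j. -/
noncomputable def twoFzero (m n : ℕ) (c : ℝ) : ℝ :=
  ∑ j ∈ Finset.range (min m n + 1),
    (m.choose j : ℝ) * (n.choose j : ℝ) * (Nat.factorial j : ℝ) * c ^ j

lemma twoFzero_eq (m n : ℕ) (c : ℝ) :
    twoFzero m n c = ∑ j ∈ range (n + 1),
      (m.choose j : ℝ) * (n.choose j : ℝ) * (j.factorial : ℝ) * c ^ j := by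
  unfold twoFzero
  apply Finset.sum_subset
  · intro j hj
    simp only [Finset.mem_range] at *
    omega
  · intro j hj hj2
    simp only [Finset.mem_range] at *
    have : m < j := by omega
    rw [Nat.choose_eq_zero_of_lt this]
    simp

lemma altsum (M : ℕ) :
    ∑ t ∈ range (M + 1), (-1 : ℝ) ^ t * (M.choose t) = if M = 0 then 1 else 0 := by
  have h2 := @Int.alternating_sum_range_choose M
  have h3 := congrArg (fun z : ℤ => (z : ℝ)) h2
  push_cast at h3
  exact h3

lemma FS (n n' : ℕ) :
    ∑ k ∈ range (n' + 1), (if n ≤ k then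
        (-1 : ℝ) ^ (k + n) * (n'.choose k) * k.factorial / (k - n).factorial else 0) =
      if n = n' then (n.factorial : ℝ) else 0 := by
  rcases lt_or_ge n' n with h | h
  · rw [if_neg (by omega)]
    apply Finset.sum_eq_zero
    intro k hk
    simp only [Finset.mem_range] at hk
    rw [if_neg (by omega)]
  · rw [← Finset.sum_subset
      (by rw [Finset.range_eq_Ico]; exact Finset.Ico_subset_Ico (by omega) le_rfl :
        Finset.Ico n (n' + 1) ⊆ range (n' + 1))
      (by intro k hk hk2; simp only [Finset.mem_range, Finset.mem_Ico] at *
          rw [if_neg (by omega)])]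
    rw [Finset.sum_Ico_eq_sum_range]
    have key : ∀ t ∈ range (n' + 1 - n), (if n ≤ n + t then
        (-1 : ℝ) ^ (n + t + n) * (n'.choose (n + t)) * (n + t).factorial / (n + t - n).factorial
        else 0) = ((n'.factorial : ℝ) / (n' - n).factorial) * ((-1 : ℝ) ^ t * ((n' - n).choose t)) := by
      intro t ht
      simp only [Finset.mem_range] at ht
      rw [if_pos (by omega)]
      have h1 : n + t - n = t := by omega
      rw [h1]
      have hnt : n + t ≤ n' := by omega
      have htn : t ≤ n' - n := by omega
      rw [Nat.cast_choose ℝ hnt, Nat.cast_choose ℝ htn]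
      have h2 : n' - (n + t) = (n' - n) - t := by omega
      rw [h2]
      have hp : (-1 : ℝ) ^ (n + t + n) = (-1 : ℝ) ^ t := by
        have : n + t + n = t + 2 * n := by omega
        rw [this, pow_add, pow_mul]
        simp
      rw [hp]
      have e1 : ((n + t).factorial : ℝ) ≠ 0 := Nat.cast_ne_zero.mpr (Nat.factorial_ne_zero _)
      have e2 : (t.factorial : ℝ) ≠ 0 := Nat.cast_ne_zero.mpr (Nat.factorial_ne_zero _)
      have e3 : (((n' - n) - t).factorial : ℝ) ≠ 0 := Nat.cast_ne_zero.mpr (Nat.factorial_ne_zero _)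
      have e4 : (((n' - n)).factorial : ℝ) ≠ 0 := Nat.cast_ne_zero.mpr (Nat.factorial_ne_zero _)
      field_simp
    rw [Finset.sum_congr rfl key, ← Finset.mul_sum]
    have h1 : n' + 1 - n = (n' - n) + 1 := by omega
    rw [h1, altsum]
    rcases eq_or_lt_of_le h with heq | hlt
    · subst heq
      simp
    · rw [if_neg (by omega), if_neg (by omega)]
      ring

theorem columns_orthonormal (r : ℝ) (hr : 0 < r) (n n' : ℕ) :
    HasSum
      (fun m : ℕ =>
        Real.exp (-r ^ 2) * r ^ (2 * m + n + n') /
            ((Nat.factorial m : ℝ) *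
              Real.sqrt ((Nat.factorial n : ℝ) * (Nat.factorial n' : ℝ))) *
          twoFzero m n (-1 / r ^ 2) * twoFzero m n' (-1 / r ^ 2))
      (if n = n' then 1 else 0) := by
  have hx : (0 : ℝ) < r ^ 2 := by positivity
  have hx0 : (r : ℝ) ^ 2 ≠ 0 := ne_of_gt hx
  set x : ℝ := r ^ 2 with hxdef
  set c : ℝ := -1 / x with hcdef
  set S : ℝ := Real.sqrt ((Nat.factorial n : ℝ) * (Nat.factorial n' : ℝ)) with hSdef
  have hSpos : 0 < S := Real.sqrt_pos.mpr (by positivity)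
  have hS0 : S ≠ 0 := ne_of_gt hSpos
  have hcx : ∀ p : ℕ, c ^ p * x ^ p = (-1 : ℝ) ^ p := by
    intro p
    rw [← mul_pow, hcdef, div_mul_cancel₀ _ hx0]
  set coef : ℕ → ℕ → ℕ → ℝ := fun j k i =>
    Real.exp (-x) * r ^ (n + n') / S * ((n.choose j : ℝ) * j.factorial * c ^ j) *
      ((n'.choose k : ℝ) * k.factorial * c ^ k) *
      ((j.choose (k - i) : ℝ) / (j.factorial * i.factorial)) with hcoef
  have hbig : HasSum
      (fun m : ℕ => ∑ j ∈ range (n + 1), ∑ k ∈ range (n' + 1), ∑ i ∈ range (k + 1),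
        coef j k i * (if j + i ≤ m then x ^ m * ((m - (j + i)).factorial : ℝ)⁻¹ else 0))
      (∑ j ∈ range (n + 1), ∑ k ∈ range (n' + 1), ∑ i ∈ range (k + 1),
        coef j k i * (x ^ (j + i) * Real.exp x)) := by
    apply hasSum_sum; intro j _
    apply hasSum_sum; intro k _
    apply hasSum_sum; intro i _
    exact (shiftedExp x (j + i)).mul_left (coef j k i)
  have hptw : ∀ m : ℕ,
      Real.exp (-x) * r ^ (2 * m + n + n') / ((Nat.factorial m : ℝ) * S) *
          twoFzero m n c * twoFzero m n' c =
        ∑ j ∈ range (n + 1), ∑ k ∈ range (n' + 1), ∑ i ∈ range (k + 1),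
          coef j k i * (if j + i ≤ m then x ^ m * ((m - (j + i)).factorial : ℝ)⁻¹ else 0) := by
    intro m
    rw [twoFzero_eq, twoFzero_eq, mul_assoc, Finset.sum_mul_sum, Finset.mul_sum]
    apply Finset.sum_congr rfl
    intro j _
    rw [Finset.mul_sum]
    apply Finset.sum_congr rfl
    intro k _
    -- per (j,k) identity using core
    have hcore := core m j k
    have hr2m : r ^ (2 * m + n + n') = x ^ m * r ^ (n + n') := by
      rw [hxdef, pow_add, pow_add, pow_mul]
      ring
    have hm0 : ((m.factorial : ℝ)) ≠ 0 := Nat.cast_ne_zero.mpr (Nat.factorial_ne_zero m)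
    calc Real.exp (-x) * r ^ (2 * m + n + n') / (↑m.factorial * S) *
          ((m.choose j : ℝ) * (n.choose j : ℝ) * (j.factorial : ℝ) * c ^ j *
          ((m.choose k : ℝ) * (n'.choose k : ℝ) * (k.factorial : ℝ) * c ^ k))
        = (Real.exp (-x) * r ^ (n + n') / S * ((n.choose j : ℝ) * j.factorial * c ^ j) *
            ((n'.choose k : ℝ) * k.factorial * c ^ k) * x ^ m) *
          ((m.choose j : ℝ) * m.choose k / m.factorial) := by
          rw [hr2m]; field_simp
      _ = ∑ i ∈ range (k + 1),
            coef j k i * (if j + i ≤ m then x ^ m * ((m - (j + i)).factorial : ℝ)⁻¹ else 0) := by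
          rw [hcore, Finset.mul_sum]
          apply Finset.sum_congr rfl
          intro i _
          rw [hcoef]
          split_ifs with h
          · ring
          · ring
  have hval : (∑ j ∈ range (n + 1), ∑ k ∈ range (n' + 1), ∑ i ∈ range (k + 1),
      coef j k i * (x ^ (j + i) * Real.exp x)) = if n = n' then 1 else 0 := by
    have hfac0 : ∀ p : ℕ, ((p.factorial : ℝ)) ≠ 0 :=
      fun p => Nat.cast_ne_zero.mpr (Nat.factorial_ne_zero p)
    have hcpow : ∀ p : ℕ, c ^ p = (-1 : ℝ) ^ p / x ^ p :=
      fun p => (eq_div_iff (pow_ne_zero p hx0)).mpr (hcx p)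
    have hinner : ∀ k i : ℕ,
        (∑ j ∈ range (n + 1), coef j k i * (x ^ (j + i) * Real.exp x)) =
          (r ^ (n + n') / S * ((n'.choose k : ℝ) * k.factorial * c ^ k) * x ^ i /
              i.factorial) *
            (if k - i = n then (-1 : ℝ) ^ n else 0) := by
      intro k i
      rw [← BI n (k - i), Finset.mul_sum]
      apply Finset.sum_congr rfl
      intro j _
      simp only [hcoef]
      rw [hcpow j, pow_add, Real.exp_neg]
      have he : Real.exp x ≠ 0 := Real.exp_ne_zero x
      field_simp
      ring
    have hmid : ∀ k ∈ range (n' + 1),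
        (∑ j ∈ range (n + 1), ∑ i ∈ range (k + 1), coef j k i * (x ^ (j + i) * Real.exp x)) =
          (r ^ (n + n') / (S * x ^ n)) *
            (if n ≤ k then (-1 : ℝ) ^ (k + n) * (n'.choose k) * k.factorial /
              (k - n).factorial else 0) := by
      intro k _
      rw [Finset.sum_comm]
      rw [Finset.sum_congr rfl (fun i _ => hinner k i)]
      rcases le_or_gt n k with hnk | hnk
      · rw [if_pos hnk]
        rw [Finset.sum_eq_single (k - n)]
        · rw [if_pos (by omega : k - (k - n) = n)]
          rw [hcpow k, pow_sub₀ x hx0 hnk]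
          have hxk : x ^ k ≠ 0 := pow_ne_zero k hx0
          have hxn : x ^ n ≠ 0 := pow_ne_zero n hx0
          field_simp
          ring
        · intro i hi hne
          simp only [Finset.mem_range] at hi
          rw [if_neg (by omega), mul_zero]
        · intro h
          exact absurd (Finset.mem_range.mpr (by omega)) h
      · rw [if_neg (by omega), mul_zero]
        apply Finset.sum_eq_zero
        intro i hi
        simp only [Finset.mem_range] at hi
        rw [if_neg (by omega), mul_zero]
    rw [Finset.sum_comm, Finset.sum_congr rfl hmid, ← Finset.mul_sum, FS n n']
    rcases eq_or_ne n n' with rfl | hne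
    · rw [if_pos rfl, if_pos rfl]
      rw [hSdef, Real.sqrt_mul_self (by positivity : (0:ℝ) ≤ (n.factorial : ℝ))]
      have hxn : x ^ n = r ^ (n + n) := by
        rw [hxdef, ← pow_mul]
        congr 1
        omega
      rw [hxn]
      have hrn : r ^ (n + n) ≠ 0 := pow_ne_zero _ (ne_of_gt hr)
      field_simp
    · rw [if_neg hne, if_neg hne, mul_zero]
  have hbig2 := hbig.congr_fun (fun m => hptw m)
  rwa [hval] at hbig2
end

section
/- Let k be a natural number and x a positive real number. Then lim_{n→∞} Φ(-n, 1+k; x/n) = k! · x^{-k/2} · J_k(2√x); explicitly, the finite sums Σ_{j=0}^{n} (-1)^j (choose n j) (x/n)^j / (k+1)_j converge, as n → ∞, to Σ_{j=0}^∞ (-1)^j k! x^j / (j! (k+j)!). -/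
open Filter Finset Topology

lemma choose_div_pow_tendsto (j : ℕ) :
    Tendsto (fun n : ℕ => (n.choose j : ℝ) / (n : ℝ) ^ j) atTop
      (𝓝 (1 / (Nat.factorial j : ℝ))) := by
  have hfac : (0:ℝ) < (Nat.factorial j : ℝ) := by positivity
  have key : Tendsto (fun n : ℕ => ∏ i ∈ range j, (1 - (i : ℝ) / n)) atTop (𝓝 1) := by
    have := tendsto_finset_prod (range j)
      (fun i (_ : i ∈ range j) =>
        ((tendsto_const_div_atTop_nhds_zero_nat (i : ℝ)).const_sub 1))
    simpa using this
  have heq : ∀ᶠ n : ℕ in atTop,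
      (∏ i ∈ range j, (1 - (i : ℝ) / n)) / (Nat.factorial j : ℝ)
        = (n.choose j : ℝ) / (n : ℝ) ^ j := by
    filter_upwards [eventually_ge_atTop j, eventually_ge_atTop 1] with n hn h1
    have hn0 : (0:ℝ) < (n : ℝ) := by exact_mod_cast h1
    have hd : (n.descFactorial j : ℝ) = ∏ i ∈ range j, ((n : ℝ) - i) := by
      rw [Nat.descFactorial_eq_prod_range]
      push_cast [Nat.cast_prod]
      refine Finset.prod_congr rfl fun i hi => ?_
      rw [Nat.cast_sub (le_trans (le_of_lt (mem_range.mp hi)) hn)]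
    have hch : (n.choose j : ℝ) * (Nat.factorial j : ℝ) = (n.descFactorial j : ℝ) := by
      rw [Nat.descFactorial_eq_factorial_mul_choose]; push_cast; ring
    have hprod : ∏ i ∈ range j, (1 - (i : ℝ) / n)
        = (∏ i ∈ range j, ((n : ℝ) - i)) / (n : ℝ) ^ j := by
      rw [show ((n:ℝ)) ^ j = ∏ _i ∈ range j, (n:ℝ) by simp, ← Finset.prod_div_distrib]
      refine Finset.prod_congr rfl fun i _ => ?_
      field_simp
    rw [hprod, ← hd, ← hch]
    field_simp
  exact (key.div_const _).congr' heq

/-- Terminating Kummer function Φ(-p, 1+k; x)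
    = Σ_{j=0}^{p} (-1)^j (choose p j) x^j / (k+1)_j. -/
noncomputable def kummerPhi (p k : ℕ) (x : ℝ) : ℝ :=
  ∑ j ∈ Finset.range (p + 1),
    (-1 : ℝ) ^ j * (p.choose j : ℝ) * x ^ j / ((ascPochhammer ℝ j).eval ((k : ℝ) + 1))

/-- Bessel function of the first kind of natural order:
    J_k(x) = Σ_{j=0}^∞ (-1)^j (x/2)^{k+2j} / (j! (k+j)!). -/
noncomputable def besselJ (k : ℕ) (x : ℝ) : ℝ :=
  ∑' j : ℕ,
    (-1 : ℝ) ^ j * (x / 2) ^ (k + 2 * j) /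
      ((Nat.factorial j : ℝ) * (Nat.factorial (k + j) : ℝ))

theorem kummer_limit_to_besselJ (k : ℕ) (x : ℝ) (hx : 0 < x) :
    Filter.Tendsto (fun n : ℕ => kummerPhi n k (x / n)) Filter.atTop
      (nhds ((Nat.factorial k : ℝ) * x ^ (-(k : ℝ) / 2) * besselJ k (2 * Real.sqrt x))) ∧
    Filter.Tendsto (fun n : ℕ => kummerPhi n k (x / n)) Filter.atTop
      (nhds (∑' j : ℕ,
        (-1 : ℝ) ^ j * (Nat.factorial k : ℝ) * x ^ j /
          ((Nat.factorial j : ℝ) * (Nat.factorial (k + j) : ℝ)))) := by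
  set P : ℕ → ℝ := fun j => (ascPochhammer ℝ j).eval ((k : ℝ) + 1) with hPdef
  have hPpos : ∀ j, 0 < P j := fun j =>
    ascPochhammer_pos j ((k : ℝ) + 1) (by positivity)
  have hPk : ∀ j, (k.factorial : ℝ) * P j = ((k + j).factorial : ℝ) := fun j =>
    factorial_mul_ascPochhammer ℝ k j
  have hkfpos : (0:ℝ) < (k.factorial : ℝ) := by positivity
  have hPeq : ∀ j, P j = ((k + j).factorial : ℝ) / (k.factorial : ℝ) := by
    intro j
    rw [eq_div_iff (ne_of_gt hkfpos), ← hPk j]; ring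
  have hP1 : ∀ j, 1 ≤ P j := by
    intro j
    have h1 : (k.factorial : ℝ) ≤ ((k + j).factorial : ℝ) := by
      exact_mod_cast Nat.factorial_le (Nat.le_add_right k j)
    rw [hPeq j]
    exact (one_le_div hkfpos).mpr h1
  set f : ℕ → ℕ → ℝ := fun n j =>
    if j ≤ n then (-1 : ℝ) ^ j * (n.choose j : ℝ) * (x / n) ^ j / P j else 0 with hfdef
  set g : ℕ → ℝ := fun j =>
    (-1 : ℝ) ^ j * (Nat.factorial k : ℝ) * x ^ j /
      ((Nat.factorial j : ℝ) * (Nat.factorial (k + j) : ℝ)) with hgdef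
  -- kummerPhi as a tsum
  have hA : ∀ n : ℕ, kummerPhi n k (x / n) = ∑' j, f n j := by
    intro n
    have h0 : ∀ j ∉ Finset.range (n + 1), f n j = 0 := fun j hj =>
      if_neg (by simpa using fun h => hj (mem_range.mpr (Nat.lt_succ_of_le h)))
    refine ((tsum_eq_sum h0).trans ?_).symm
    unfold kummerPhi
    exact Finset.sum_congr rfl fun j hj =>
      if_pos (Nat.lt_succ_iff.mp (mem_range.mp hj))
  -- pointwise limits
  have hab : ∀ j : ℕ, Tendsto (fun n => f n j) atTop (𝓝 (g j)) := by
    intro j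
    have heq : ∀ᶠ n : ℕ in atTop,
        ((-1 : ℝ) ^ j * x ^ j / P j) * ((n.choose j : ℝ) / (n : ℝ) ^ j) = f n j := by
      filter_upwards [eventually_ge_atTop j] with n hn
      rw [hfdef]
      simp only [if_pos hn, div_pow]
      ring
    have hT := (((choose_div_pow_tendsto j).const_mul
      ((-1 : ℝ) ^ j * x ^ j / P j)).congr' heq)
    convert hT using 2
    rw [hgdef, hPeq j]
    have hfj : (0:ℝ) < (Nat.factorial j : ℝ) := by positivity
    have hfkj : (0:ℝ) < (Nat.factorial (k + j) : ℝ) := by positivity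
    field_simp
  -- dominating bound
  have hbound_nonneg : ∀ j, 0 ≤ x ^ j / ((Nat.factorial j : ℝ) * P j) := by
    intro j
    have := hPpos j
    positivity
  have h_sum : Summable (fun j => x ^ j / ((Nat.factorial j : ℝ) * P j)) := by
    refine Summable.of_nonneg_of_le hbound_nonneg (fun j => ?_)
      (Real.summable_pow_div_factorial x)
    have hfj : (0:ℝ) < (Nat.factorial j : ℝ) := by positivity
    have hxj : (0:ℝ) ≤ x ^ j := by positivity
    refine div_le_div_of_nonneg_left hxj (by positivity) ?_
    nlinarith [hP1 j, hfj]
  have h_bound : ∀ᶠ n : ℕ in atTop, ∀ j : ℕ,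
      ‖f n j‖ ≤ x ^ j / ((Nat.factorial j : ℝ) * P j) := by
    filter_upwards [eventually_ge_atTop 1] with n hn j
    rw [hfdef]
    by_cases hjn : j ≤ n
    · simp only [if_pos hjn]
      have hn0 : (0:ℝ) < (n : ℝ) := by exact_mod_cast hn
      have hxn : (0:ℝ) ≤ x / n := by positivity
      have hfj : (0:ℝ) < (Nat.factorial j : ℝ) := by positivity
      have habs : ‖(-1 : ℝ) ^ j * (n.choose j : ℝ) * (x / n) ^ j / P j‖
          = (n.choose j : ℝ) * (x / n) ^ j / P j := by
        rw [Real.norm_eq_abs, abs_div, abs_of_pos (hPpos j), abs_mul, abs_mul, abs_pow,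
          abs_neg, abs_one, one_pow, one_mul, abs_of_nonneg (pow_nonneg hxn j),
          abs_of_nonneg (Nat.cast_nonneg _)]
      rw [habs]
      have hkey : (n.choose j : ℝ) * (x / n) ^ j ≤ x ^ j / (Nat.factorial j : ℝ) := by
        have hdesc : (n.choose j : ℝ) * (Nat.factorial j : ℝ) ≤ (n : ℝ) ^ j := by
          have h1 := Nat.descFactorial_le_pow n j
          rw [Nat.descFactorial_eq_factorial_mul_choose] at h1
          calc (n.choose j : ℝ) * (Nat.factorial j : ℝ)
              = ((Nat.factorial j * n.choose j : ℕ) : ℝ) := by push_cast; ring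
            _ ≤ ((n ^ j : ℕ) : ℝ) := by exact_mod_cast h1
            _ = (n : ℝ) ^ j := by push_cast; ring
        have hcle : (n.choose j : ℝ) ≤ (n : ℝ) ^ j / (Nat.factorial j : ℝ) := by
          rw [le_div_iff₀ hfj]; exact hdesc
        have hnj : (0:ℝ) < (n:ℝ) ^ j := pow_pos hn0 j
        calc (n.choose j : ℝ) * (x / n) ^ j
            ≤ ((n : ℝ) ^ j / (Nat.factorial j : ℝ)) * (x / n) ^ j :=
              mul_le_mul_of_nonneg_right hcle (pow_nonneg hxn j)
          _ = x ^ j / (Nat.factorial j : ℝ) := by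
              rw [div_pow]; field_simp
      calc (n.choose j : ℝ) * (x / n) ^ j / P j
          ≤ (x ^ j / (Nat.factorial j : ℝ)) / P j :=
            (div_le_div_iff_of_pos_right (hPpos j)).mpr hkey
        _ = x ^ j / ((Nat.factorial j : ℝ) * P j) := by rw [div_div]
    · simp only [if_neg hjn, norm_zero]
      exact hbound_nonneg j
  have hmain : Tendsto (fun n : ℕ => kummerPhi n k (x / n)) atTop (𝓝 (∑' j, g j)) := by
    have := tendsto_tsum_of_dominated_convergence h_sum hab h_bound
    exact this.congr fun n => (hA n).symm
  refine ⟨?_, hmain⟩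
  -- value identification
  have hval : (Nat.factorial k : ℝ) * x ^ (-(k : ℝ) / 2) * besselJ k (2 * Real.sqrt x)
      = ∑' j, g j := by
    rw [besselJ, ← tsum_mul_left]
    refine tsum_congr fun j => ?_
    have h2 : 2 * Real.sqrt x / 2 = Real.sqrt x := by ring
    have hs : Real.sqrt x ^ (k + 2 * j) = Real.sqrt x ^ k * x ^ j := by
      rw [pow_add, pow_mul, Real.sq_sqrt hx.le]
    have hsk : Real.sqrt x ^ k = x ^ ((k : ℝ) / 2) := by
      rw [Real.sqrt_eq_rpow, ← Real.rpow_natCast (x ^ ((1:ℝ)/2)) k, ← Real.rpow_mul hx.le]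
      congr 1
      ring
    have key : x ^ (-(k : ℝ) / 2) * Real.sqrt x ^ (k + 2 * j) = x ^ j := by
      rw [hs, hsk, ← mul_assoc, ← Real.rpow_add hx]
      have hz : -(k : ℝ) / 2 + (k : ℝ) / 2 = 0 := by ring
      rw [hz, Real.rpow_zero, one_mul]
    rw [hgdef]
    calc (Nat.factorial k : ℝ) * x ^ (-(k : ℝ) / 2) *
          ((-1 : ℝ) ^ j * (2 * Real.sqrt x / 2) ^ (k + 2 * j) /
            ((Nat.factorial j : ℝ) * (Nat.factorial (k + j) : ℝ)))
        = (-1 : ℝ) ^ j * (Nat.factorial k : ℝ) *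
            (x ^ (-(k : ℝ) / 2) * Real.sqrt x ^ (k + 2 * j)) /
            ((Nat.factorial j : ℝ) * (Nat.factorial (k + j) : ℝ)) := by rw [h2]; ring
      _ = (-1 : ℝ) ^ j * (Nat.factorial k : ℝ) * x ^ j /
            ((Nat.factorial j : ℝ) * (Nat.factorial (k + j) : ℝ)) := by rw [key]
  rw [hval]; exact hmain
end
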